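/- Let n ≥ 4 and let a, b ≥ 1. Then in the singular Hecke algebra H(SB_n), with B_{12} = σ_1 + σ_2 − (q−1) and B_{23} = σ_2 + σ_3 − (q−1): τ_1^a τ_3^b (σ_3 − σ_1) = (τ_2^b τ_1^a + τ_2^a τ_3^b)(σ_3 − σ_1) + τ_2^{a+b} (B_{12} − B_{23}). -/

import Mathlib

noncomputable section
open scoped Classical

/-- `𝕂 = ℂ(q)`. -/
abbrev K : Type := RatFunc ℂ
/-- `𝕂(z)`. -/
abbrev Kz : Type := RatFunc K
/-- the variable `q`. -/
def q : K := RatFunc.X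
/-- the variable `z`. -/
def z : Kz := RatFunc.X

/-- Generators of the singular braid monoid on `n` strands:
`s i` is `σ_{i+1}`, `si i` is `σ_{i+1}⁻¹`, `t i` is `τ_{i+1}` (0-indexed `i`). -/
inductive SBGen (n : ℕ) : Type
  | s (i : Fin (n - 1))
  | si (i : Fin (n - 1))
  | t (i : Fin (n - 1))

/-- `|i - j| = 1`. -/
def adj {n : ℕ} (i j : Fin (n - 1)) : Prop := (i : ℕ) + 1 = (j : ℕ) ∨ (j : ℕ) + 1 = (i : ℕ)
/-- `|i - j| ≥ 2`. -/
def far {n : ℕ} (i j : Fin (n - 1)) : Prop := (i : ℕ) + 2 ≤ (j : ℕ) ∨ (j : ℕ) + 2 ≤ (i : ℕ)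

open FreeMonoid in
/-- The defining relations of the singular braid monoid. -/
inductive SBRel (n : ℕ) : FreeMonoid (SBGen n) → FreeMonoid (SBGen n) → Prop
  | inv_right (i) : SBRel n (of (.s i) * of (.si i)) 1
  | inv_left (i) : SBRel n (of (.si i) * of (.s i)) 1
  | sigma_tau (i) : SBRel n (of (.s i) * of (.t i)) (of (.t i) * of (.s i))
  | braid (i j) : adj i j →
      SBRel n (of (.s i) * of (.s j) * of (.s i)) (of (.s j) * of (.s i) * of (.s j))
  | braid_tau (i j) : adj i j →
      SBRel n (of (.s i) * of (.s j) * of (.t i)) (of (.t j) * of (.s i) * of (.s j))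
  | ss_comm (i j) : far i j → SBRel n (of (.s i) * of (.s j)) (of (.s j) * of (.s i))
  | st_comm (i j) : far i j → SBRel n (of (.s i) * of (.t j)) (of (.t j) * of (.s i))
  | tt_comm (i j) : far i j → SBRel n (of (.t i) * of (.t j)) (of (.t j) * of (.t i))

/-- The congruence generated by the singular braid relations. -/
def SBcon (n : ℕ) : Con (FreeMonoid (SBGen n)) := conGen (SBRel n)

/-- The singular braid monoid `SB_n`. -/
def SB (n : ℕ) : Type := (SBcon n).Quotient

instance (n : ℕ) : Monoid (SB n) := Con.monoid _

/-- The generator `σ_{i+1}` of `SB_n`. -/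
def sσ {n : ℕ} (i : Fin (n - 1)) : SB n := (SBcon n).mk' (FreeMonoid.of (.s i))
/-- The generator `σ_{i+1}⁻¹` of `SB_n`. -/
def sσi {n : ℕ} (i : Fin (n - 1)) : SB n := (SBcon n).mk' (FreeMonoid.of (.si i))
/-- The generator `τ_{i+1}` of `SB_n`. -/
def sτ {n : ℕ} (i : Fin (n - 1)) : SB n := (SBcon n).mk' (FreeMonoid.of (.t i))

/-- Number of singular points of a generator. -/
def genDeg {n : ℕ} : SBGen n → Multiplicative ℕ
  | .t _ => Multiplicative.ofAdd 1
  | _ => 1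

/-- Number of singular points of a word. -/
def degF (n : ℕ) : FreeMonoid (SBGen n) →* Multiplicative ℕ := FreeMonoid.lift genDeg

lemma degF_rel {n : ℕ} : SBcon n ≤ Con.ker (degF n) := by
  refine Con.conGen_le.2 ?_
  rintro x y h
  rw [Con.ker_rel]
  cases h <;>
    simp [degF, genDeg, mul_comm]

/-- The number of singular points, as a monoid homomorphism. -/
def deg {n : ℕ} : SB n →* Multiplicative ℕ := Con.lift _ (degF n) degF_rel

/-- The number of singular points of a singular braid. -/
def ndeg {n : ℕ} (β : SB n) : ℕ := Multiplicative.toAdd (deg β)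

/-- `S_d B_n` : the set of singular braids on `n` strands with `d` singular points. -/
def SdB (d n : ℕ) : Set (SB n) := {β | ndeg β = d}

lemma ndeg_mul {n : ℕ} (α β : SB n) : ndeg (α * β) = ndeg α + ndeg β := by
  simp [ndeg, map_mul]

lemma ndeg_one {n : ℕ} : ndeg (1 : SB n) = 0 := by simp [ndeg]

lemma ndeg_pow {n : ℕ} (β : SB n) (m : ℕ) : ndeg (β ^ m) = m * ndeg β := by
  induction m with
  | zero => simp [ndeg_one]
  | succ m ih => rw [pow_succ, ndeg_mul, ih]; ring

lemma ndeg_sσ {n : ℕ} (i : Fin (n - 1)) : ndeg (sσ i) = 0 := rfl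

lemma ndeg_sσi {n : ℕ} (i : Fin (n - 1)) : ndeg (sσi i) = 0 := by
  rfl

lemma ndeg_sτ {n : ℕ} (i : Fin (n - 1)) : ndeg (sτ i) = 1 := by
  rfl

lemma mem_SdB {n d : ℕ} {β : SB n} (h : ndeg β = d) : β ∈ SdB d n := h
/-- The monoid algebra `𝕂[SB_n]`. -/
abbrev MA (n : ℕ) : Type := MonoidAlgebra K (SB n)

/-- The Hecke relations `σ_k² = (q-1)σ_k + q`. -/
def hrel (n : ℕ) : MA n → MA n → Prop := fun x y =>
  ∃ i : Fin (n - 1), x = (MonoidAlgebra.of K (SB n) (sσ i)) ^ 2 ∧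
    y = (q - 1) • MonoidAlgebra.of K (SB n) (sσ i) + q • 1

/-- The singular Hecke algebra `H(SB_n)`. -/
def H (n : ℕ) : Type := RingQuot (hrel n)

instance (n : ℕ) : Ring (H n) := inferInstanceAs (Ring (RingQuot (hrel n)))
instance (n : ℕ) : Algebra K (H n) := inferInstanceAs (Algebra K (RingQuot (hrel n)))

/-- The natural map `SB_n → H(SB_n)`. -/
def ιH {n : ℕ} (β : SB n) : H n := RingQuot.mkAlgHom K (hrel n) (MonoidAlgebra.of K (SB n) β)

/-- The image of `σ_{i+1}` in the singular Hecke algebra. -/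
def σH {n : ℕ} (i : Fin (n - 1)) : H n := ιH (sσ i)
/-- The image of `τ_{i+1}` in the singular Hecke algebra. -/
def τH {n : ℕ} (i : Fin (n - 1)) : H n := ιH (sτ i)

/-- Scalars inside the singular Hecke algebra. -/
def cK {n : ℕ} (c : K) : H n := algebraMap K (H n) c

/-- `H(S_d B_n)` : the 𝕂-subspace of `H(SB_n)` spanned by the braids with `d` singular points. -/
def HSd (d n : ℕ) : Submodule K (H n) := Submodule.span K (ιH '' SdB d n)

lemma ιH_mem {n d : ℕ} {β : SB n} (h : β ∈ SdB d n) : ιH β ∈ HSd d n :=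
  Submodule.subset_span ⟨β, h, rfl⟩

/-- Map on generators realizing the inclusion `SB_n ↪ SB_{n+1}`. -/
def genMap {n : ℕ} : SBGen n → SBGen (n + 1)
  | .s i => .s (Fin.castLE (by omega) i)
  | .si i => .si (Fin.castLE (by omega) i)
  | .t i => .t (Fin.castLE (by omega) i)

lemma incl_wd {n : ℕ} :
    SBcon n ≤ Con.ker ((SBcon (n + 1)).mk'.comp (FreeMonoid.map genMap)) := by
  refine Con.conGen_le.2 ?_
  rintro x y h
  rw [Con.ker_rel]
  cases h with
  | inv_right i => exact (Con.eq _).mpr (ConGen.Rel.of _ _ (SBRel.inv_right _))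
  | inv_left i => exact (Con.eq _).mpr (ConGen.Rel.of _ _ (SBRel.inv_left _))
  | sigma_tau i => exact (Con.eq _).mpr (ConGen.Rel.of _ _ (SBRel.sigma_tau _))
  | braid i j hij =>
      refine (Con.eq _).mpr (ConGen.Rel.of _ _ (SBRel.braid _ _ ?_))
      simpa [adj] using hij
  | braid_tau i j hij =>
      refine (Con.eq _).mpr (ConGen.Rel.of _ _ (SBRel.braid_tau _ _ ?_))
      simpa [adj] using hij
  | ss_comm i j hij =>
      refine (Con.eq _).mpr (ConGen.Rel.of _ _ (SBRel.ss_comm _ _ ?_))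
      simpa [far] using hij
  | st_comm i j hij =>
      refine (Con.eq _).mpr (ConGen.Rel.of _ _ (SBRel.st_comm _ _ ?_))
      simpa [far] using hij
  | tt_comm i j hij =>
      refine (Con.eq _).mpr (ConGen.Rel.of _ _ (SBRel.tt_comm _ _ ?_))
      simpa [far] using hij

/-- The natural monoid homomorphism `SB_n → SB_{n+1}`. -/
def incl {n : ℕ} : SB n →* SB (n + 1) :=
  Con.lift _ ((SBcon (n + 1)).mk'.comp (FreeMonoid.map genMap)) incl_wd

lemma degF_genMap {n : ℕ} (w : FreeMonoid (SBGen n)) :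
    degF (n + 1) (FreeMonoid.map genMap w) = degF n w := by
  change ((degF (n+1)).comp (FreeMonoid.map genMap)) w = degF n w
  refine DFunLike.congr_fun (FreeMonoid.hom_eq fun a => ?_) w
  cases a <;> rfl

lemma ndeg_incl {n : ℕ} (β : SB n) : ndeg (incl β) = ndeg β := by
  induction β using Con.induction_on with
  | H w =>
    show Multiplicative.toAdd (degF (n + 1) (FreeMonoid.map genMap w)) =
      Multiplicative.toAdd (degF n w)
    rw [degF_genMap]

/-- The generator `σ_n` of `SB_{n+2}` (0-indexed `n`), used in the Markov condition. -/
def lastGen (n : ℕ) : Fin ((n + 2) - 1) := ⟨n, by omega⟩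

/-- A collection of 𝕂-linear maps `H(S_d B_n) → 𝕂(z)`, `n ≥ 1`
(index `n` in the collection corresponds to `n+1` strands). -/
abbrev TRc (d : ℕ) : Type := ∀ n : ℕ, HSd d (n + 1) →ₗ[K] Kz

/-- The Markov trace conditions. -/
def IsMarkov (d : ℕ) (T : TRc d) : Prop :=
  (∀ (n k l : ℕ) (α β : SB (n + 1)), α ∈ SdB k (n + 1) → β ∈ SdB l (n + 1) → k + l = d →
    ∀ (h₁ : ιH (α * β) ∈ HSd d (n + 1)) (h₂ : ιH (β * α) ∈ HSd d (n + 1)),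
      T n ⟨ιH (α * β), h₁⟩ = T n ⟨ιH (β * α), h₂⟩) ∧
  (∀ (n : ℕ) (β : SB (n + 1)), β ∈ SdB d (n + 1) →
    ∀ (h₁ : ιH (incl β) ∈ HSd d (n + 2)) (h₂ : ιH β ∈ HSd d (n + 1)),
      T (n + 1) ⟨ιH (incl β), h₁⟩ = T n ⟨ιH β, h₂⟩) ∧
  (∀ (n : ℕ) (β : SB (n + 1)), β ∈ SdB d (n + 1) →
    ∀ (h₁ : ιH (incl β * sσ (lastGen n)) ∈ HSd d (n + 2)) (h₂ : ιH β ∈ HSd d (n + 1)),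
      T (n + 1) ⟨ιH (incl β * sσ (lastGen n)), h₁⟩ = z * T n ⟨ιH β, h₂⟩)

/-- `TR_d` : the 𝕂(z)-vector space of Markov traces on `{H(S_d B_n)}ₙ`. -/
def TR (d : ℕ) : Submodule Kz (TRc d) where
  carrier := {T | IsMarkov d T}
  add_mem' := by
    rintro a b ⟨ha1, ha2, ha3⟩ ⟨hb1, hb2, hb3⟩
    refine ⟨?_, ?_, ?_⟩
    · intro n k l α β hα hβ hkl h₁ h₂
      simp only [Pi.add_apply, LinearMap.add_apply,
        ha1 n k l α β hα hβ hkl h₁ h₂, hb1 n k l α β hα hβ hkl h₁ h₂]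
    · intro n β hβ h₁ h₂
      simp only [Pi.add_apply, LinearMap.add_apply, ha2 n β hβ h₁ h₂, hb2 n β hβ h₁ h₂]
    · intro n β hβ h₁ h₂
      simp only [Pi.add_apply, LinearMap.add_apply, ha3 n β hβ h₁ h₂, hb3 n β hβ h₁ h₂]
      ring
  zero_mem' := by
    refine ⟨?_, ?_, ?_⟩ <;> intros <;> simp
  smul_mem' := by
    rintro c a ⟨ha1, ha2, ha3⟩
    refine ⟨?_, ?_, ?_⟩
    · intro n k l α β hα hβ hkl h₁ h₂
      simp only [Pi.smul_apply, LinearMap.smul_apply, ha1 n k l α β hα hβ hkl h₁ h₂]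
    · intro n β hβ h₁ h₂
      simp only [Pi.smul_apply, LinearMap.smul_apply, ha2 n β hβ h₁ h₂]
    · intro n β hβ h₁ h₂
      simp only [Pi.smul_apply, LinearMap.smul_apply, ha3 n β hβ h₁ h₂, smul_eq_mul]
      ring

lemma ndeg_list_prod {n : ℕ} (l : List (SB n)) : ndeg l.prod = (l.map ndeg).sum := by
  induction l with
  | nil => simpa using ndeg_one
  | cons a l ih => simp [ndeg_mul, ih]

lemma mem_expr {m d : ℕ} (α : Fin (d + 1) → SB m) (hα : ∀ j, α j ∈ SdB 0 m)
    (idx : Fin d → Fin (m - 1)) :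
    (α 0 * (List.ofFn fun j : Fin d => sτ (idx j) * α j.succ).prod) ∈ SdB d m := by
  refine mem_SdB ?_
  rw [ndeg_mul, ndeg_list_prod, List.map_ofFn, hα 0]
  have h : (fun j : Fin d => ndeg (sτ (idx j) * α j.succ)) = fun _ => 1 := by
    funext j; rw [ndeg_mul, ndeg_sτ, hα j.succ]
  rw [show ndeg ∘ (fun j : Fin d => sτ (idx j) * α j.succ)
      = fun j : Fin d => ndeg (sτ (idx j) * α j.succ) from rfl, h]
  simp

lemma mem_exprS {m d : ℕ} (α : Fin (d + 1) → SB m) (hα : ∀ j, α j ∈ SdB 0 m)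
    (idx : Fin d → Fin (m - 1)) (S : Finset (Fin d)) :
    (α 0 * (List.ofFn fun j : Fin d =>
      (if j ∈ S then sσ (idx j) else 1) * α j.succ).prod) ∈ SdB 0 m := by
  refine mem_SdB ?_
  rw [ndeg_mul, ndeg_list_prod, List.map_ofFn, hα 0]
  have h : (fun j : Fin d => ndeg ((if j ∈ S then sσ (idx j) else 1) * α j.succ))
      = fun _ => 0 := by
    funext j
    rw [ndeg_mul, hα j.succ]
    split <;> simp [ndeg_sσ, ndeg_one]
  rw [show ndeg ∘ (fun j : Fin d => (if j ∈ S then sσ (idx j) else 1) * α j.succ)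
      = fun j : Fin d => ndeg ((if j ∈ S then sσ (idx j) else 1) * α j.succ) from rfl, h]
  simp

lemma mem_tau_pow {n : ℕ} (i : Fin (n - 1)) (d : ℕ) : (sτ i) ^ d ∈ SdB d n := by
  refine mem_SdB ?_; simp [ndeg_pow, ndeg_sτ]

lemma mem_tau_pow_sigma {n : ℕ} (i i' : Fin (n - 1)) (d : ℕ) :
    (sτ i) ^ d * sσ i' ∈ SdB d n := by
  refine mem_SdB ?_; simp [ndeg_mul, ndeg_pow, ndeg_sτ, ndeg_sσ]

lemma mem_tau_tau {n : ℕ} (i i' : Fin (n - 1)) (a b : ℕ) :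
    (sτ i) ^ a * (sτ i') ^ b ∈ SdB (a + b) n := by
  refine mem_SdB ?_; simp [ndeg_mul, ndeg_pow, ndeg_sτ]

lemma mem_tau_tau_sigma {n : ℕ} (i i' i'' : Fin (n - 1)) (a b : ℕ) :
    (sτ i) ^ a * (sτ i') ^ b * sσ i'' ∈ SdB (a + b) n := by
  refine mem_SdB ?_; simp [ndeg_mul, ndeg_pow, ndeg_sτ, ndeg_sσ]

/-- `σ_{i+1}` with out-of-range indices interpreted as `1`. -/
def sσ' (n : ℕ) (i : ℕ) : SB n := if h : i < n - 1 then sσ ⟨i, h⟩ else 1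

/-- `descChain n m = σ_{n-1} σ_{n-2} ⋯ σ_{n-m}` (1-indexed), `m` letters. -/
def descChain (n : ℕ) : ℕ → SB n
  | 0 => 1
  | m + 1 => descChain n m * sσ' n (n - 2 - m)

/-- The sets `ℬ_n` describing the standard basis of the Hecke algebra `H(B_n)`:
`ℬ_1 = {1}` and `ℬ_n = {β u : β ∈ ℬ_{n-1}, u ∈ U_n}` where
`U_n = {1, σ_{n-1}, σ_{n-1}σ_{n-2}, …, σ_{n-1}⋯σ_1}`. -/
def Bset : (n : ℕ) → Set (SB n)
  | 0 => {1}
  | n + 1 => {x | ∃ β ∈ Bset n, ∃ m ≤ n, x = incl β * descChain (n + 1) m}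

/-- The set `𝒞_{d,n}` of singular braids of the form `τ_{i_1} ⋯ τ_{i_d} β` with `β ∈ ℬ_n`. -/
def Cdn (d n : ℕ) : Set (SB n) :=
  {x | ∃ idx : Fin d → Fin (n - 1), ∃ β ∈ Bset n,
    x = (List.ofFn fun j : Fin d => sτ (idx j)).prod * β}


/-!
Put `u = σ₃ - σ₁` and
`E(a, b) = mixedDiff τ₁ τ₂ τ₃ a b = τ₁^a τ₃^b - τ₂^b τ₁^a - τ₂^a τ₃^b + τ₂^(a+b)`. Since
`B₁₂ - B₂₃ = -u`, the identity says `E(a, b) u = 0`. As `τ₁` and `τ₃` commute with each other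
and with `u`, the recursions `E(a+1, 1) = E(a, 1) τ₁ + τ₂^a E(1, 1)` and
`E(a, b+1) = τ₂ E(a, b) + E(a, 1) τ₃^b` reduce everything to `E(1, 1) u = 0`.

That case only uses the relations between two adjacent strands. Since `σ₁ σ₂² σ₁` commutes with
`τ₂`, expanding `σ₂²` and cancelling `q - 1` gives `σ₁ (τ₁ - τ₂) σ₂ = -q (τ₁ - τ₂)`, i.e.
`σ₁ (τ₁ - τ₂) + (τ₁ - τ₂) σ₂ = (q - 1)(τ₁ - τ₂)`, which is equivalent to `B₁₂ τ₁ = τ₂ B₁₂`.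
With these, `(τ₁ - τ₂) u = B₂₃ (τ₁ - τ₂) + (τ₃ - τ₂) B₂₃`, and `E(1, 1) u` collapses.
-/

lemma q_ne_zero : q ≠ 0 := RatFunc.X_ne_zero

lemma q_ne_one : q ≠ 1 := fun h => RatFunc.transcendental_X (h ▸ isAlgebraic_one)

section MixedDiff

variable {R : Type*} [Ring R] {x y z u : R}

def mixedDiff (x y z : R) (a b : ℕ) : R :=
  x ^ a * z ^ b - y ^ b * x ^ a - y ^ a * z ^ b + y ^ (a + b)

lemma mixedDiff_one_one : mixedDiff x y z 1 1 = x * z - y * x - y * z + y * y := by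
  simp [mixedDiff, pow_two]

lemma mixedDiff_succ_left (hxz : Commute x z) (a : ℕ) :
    mixedDiff x y z (a + 1) 1 = mixedDiff x y z a 1 * x + y ^ a * mixedDiff x y z 1 1 := by
  simp only [mixedDiff, pow_succ]
  linear_combination (norm := noncomm_ring) x ^ a * hxz.eq - y ^ a * hxz.eq

lemma mixedDiff_succ_right (a b : ℕ) :
    mixedDiff x y z a (b + 1) = y * mixedDiff x y z a b + mixedDiff x y z a 1 * z ^ b := by
  simp only [mixedDiff, ← add_assoc, pow_succ']
  noncomm_ring

lemma mixedDiff_mul_eq_zero (hxz : Commute x z) (hxu : Commute x u) (hzu : Commute z u)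
    (h : mixedDiff x y z 1 1 * u = 0) (a b : ℕ) : mixedDiff x y z a b * u = 0 := by
  have left (a : ℕ) : mixedDiff x y z a 1 * u = 0 := by
    induction a with
    | zero => simp [mixedDiff]
    | succ a ih =>
      rw [mixedDiff_succ_left hxz, add_mul, mul_assoc, hxu.eq, ← mul_assoc, ih, mul_assoc, h]
      simp
  induction b with
  | zero => simp [mixedDiff]
  | succ b ih =>
    rw [mixedDiff_succ_right, add_mul, mul_assoc, ih, mul_assoc, (hzu.pow_left b).eq,
      ← mul_assoc, left]
    simp

end MixedDiff

section SingularHeckePair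

variable {F R : Type*} [Field F] [Ring R] [Algebra F R]

lemma isUnit_of_hecke {Q : F} (hQ : Q ≠ 0) {σ : R} (h : σ * σ = (Q - 1) • σ + Q • 1) :
    IsUnit σ := by
  have hσ : σ * σ - (Q - 1) • σ = Q • 1 := sub_eq_of_eq_add' h
  refine ⟨⟨σ, Q⁻¹ • (σ - (Q - 1) • 1), ?_, ?_⟩, rfl⟩
  · rw [mul_smul_comm, mul_sub, mul_smul_comm, mul_one, hσ, smul_smul, inv_mul_cancel₀ hQ,
      one_smul]
  · rw [smul_mul_assoc, sub_mul, smul_mul_assoc, one_mul, hσ, smul_smul, inv_mul_cancel₀ hQ,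
      one_smul]

structure IsSingularHeckePair (Q : F) (σ₁ σ₂ τ₁ τ₂ : R) : Prop where
  hecke₁ : σ₁ * σ₁ = (Q - 1) • σ₁ + Q • 1
  hecke₂ : σ₂ * σ₂ = (Q - 1) • σ₂ + Q • 1
  commute₁ : σ₁ * τ₁ = τ₁ * σ₁
  commute₂ : σ₂ * τ₂ = τ₂ * σ₂
  braid_tau₁ : σ₁ * σ₂ * τ₁ = τ₂ * σ₁ * σ₂
  braid_tau₂ : σ₂ * σ₁ * τ₂ = τ₁ * σ₂ * σ₁

namespace IsSingularHeckePair

variable {Q : F} {σ₁ σ₂ τ₁ τ₂ : R}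

lemma symm (h : IsSingularHeckePair Q σ₁ σ₂ τ₁ τ₂) : IsSingularHeckePair Q σ₂ σ₁ τ₂ τ₁ :=
  ⟨h.hecke₂, h.hecke₁, h.commute₂, h.commute₁, h.braid_tau₂, h.braid_tau₁⟩

lemma commutator_half_twist (h : IsSingularHeckePair Q σ₁ σ₂ τ₁ τ₂) (hQ : Q ≠ 1) :
    σ₁ * σ₂ * σ₁ * τ₂ - τ₂ * (σ₁ * σ₂ * σ₁) = Q • (τ₂ * σ₁ - σ₁ * τ₂) := by
  refine smul_right_injective R (sub_ne_zero.mpr hQ) ?_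
  linear_combination (norm := skip) σ₁ * σ₂ * h.braid_tau₂ + h.braid_tau₁ * σ₂ * σ₁
    - σ₁ * h.hecke₂ * σ₁ * τ₂ + τ₂ * σ₁ * h.hecke₂ * σ₁ - Q • (h.hecke₁ * τ₂) + Q • (τ₂ * h.hecke₁)
  simp only [mul_add, add_mul, smul_add, smul_sub, smul_mul_assoc, mul_smul_comm, mul_assoc,
    one_mul, mul_one]
  module

lemma mul_sub_mul (h : IsSingularHeckePair Q σ₁ σ₂ τ₁ τ₂) (hQ₀ : Q ≠ 0) (hQ₁ : Q ≠ 1) :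
    σ₁ * (τ₁ - τ₂) * σ₂ = (-Q) • (τ₁ - τ₂) := by
  refine ((isUnit_of_hecke hQ₀ h.hecke₁).mul (isUnit_of_hecke hQ₀ h.hecke₂)).mul_left_cancel ?_
  linear_combination (norm := skip) σ₁ * σ₂ * h.commute₁ * σ₂ + h.braid_tau₁ * σ₁ * σ₂
    - h.commutator_half_twist hQ₁ * σ₂ + Q • h.braid_tau₁ - Q • (σ₁ * h.commute₂)
  simp only [mul_sub, sub_mul, smul_sub, smul_mul_assoc, mul_smul_comm, mul_assoc]
  module

lemma mul_sub_add_sub_mul (h : IsSingularHeckePair Q σ₁ σ₂ τ₁ τ₂) (hQ₀ : Q ≠ 0) (hQ₁ : Q ≠ 1) :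
    σ₁ * (τ₁ - τ₂) + (τ₁ - τ₂) * σ₂ = (Q - 1) • (τ₁ - τ₂) := by
  refine (isUnit_of_hecke hQ₀ h.hecke₂).mul_right_cancel ?_
  linear_combination (norm := skip) h.mul_sub_mul hQ₀ hQ₁ + (τ₁ - τ₂) * h.hecke₂
  simp only [mul_add, add_mul, mul_sub, sub_mul, smul_sub, smul_mul_assoc, mul_smul_comm,
    mul_assoc, mul_one]
  module

-- `σ₁ + σ₂ - (Q - 1) • 1` is the element `B₁₂` of the statement.

lemma B_mul_τ₁ (h : IsSingularHeckePair Q σ₁ σ₂ τ₁ τ₂) (hQ₀ : Q ≠ 0) (hQ₁ : Q ≠ 1) :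
    (σ₁ + σ₂ - (Q - 1) • 1) * τ₁ = τ₂ * (σ₁ + σ₂ - (Q - 1) • 1) := by
  linear_combination (norm := skip) -h.symm.mul_sub_add_sub_mul hQ₀ hQ₁ + h.commute₂ + h.commute₁
  simp only [mul_add, add_mul, mul_sub, sub_mul, smul_sub, smul_mul_assoc, mul_smul_comm, one_mul,
    mul_one]
  module

lemma B_mul_τ₂ (h : IsSingularHeckePair Q σ₁ σ₂ τ₁ τ₂) (hQ₀ : Q ≠ 0) (hQ₁ : Q ≠ 1) :
    (σ₁ + σ₂ - (Q - 1) • 1) * τ₂ = τ₁ * (σ₁ + σ₂ - (Q - 1) • 1) := by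
  rw [add_comm σ₁]
  exact h.symm.B_mul_τ₁ hQ₀ hQ₁

lemma τ₂_mul_σ₁ (h : IsSingularHeckePair Q σ₁ σ₂ τ₁ τ₂) (hQ₀ : Q ≠ 0) (hQ₁ : Q ≠ 1) :
    τ₂ * σ₁ = σ₁ * τ₂ + (σ₁ + σ₂ - (Q - 1) • 1) * (τ₁ - τ₂) := by
  linear_combination (norm := skip) -h.B_mul_τ₁ hQ₀ hQ₁ + h.commute₂
  simp only [mul_add, add_mul, mul_sub, sub_mul, smul_mul_assoc, mul_smul_comm, one_mul, mul_one]
  module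

end IsSingularHeckePair

variable {Q : F} {s₁ s₂ s₃ t₁ t₂ t₃ : R}

lemma mixedDiff_one_one_mul_sub_eq_zero (h₁ : IsSingularHeckePair Q s₁ s₂ t₁ t₂)
    (h₃ : IsSingularHeckePair Q s₃ s₂ t₃ t₂) (hs₁t₃ : s₁ * t₃ = t₃ * s₁)
    (hs₃t₁ : s₃ * t₁ = t₁ * s₃) (ht : t₁ * t₃ = t₃ * t₁) (hQ₀ : Q ≠ 0) (hQ₁ : Q ≠ 1) :
    mixedDiff t₁ t₂ t₃ 1 1 * (s₃ - s₁) = 0 := by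
  obtain ⟨B, hB⟩ : ∃ B, B = s₃ + s₂ - (Q - 1) • 1 := ⟨_, rfl⟩
  have hBt₃ : B * t₃ = t₂ * B := hB ▸ h₃.B_mul_τ₁ hQ₀ hQ₁
  have hBt₂ : B * t₂ = t₃ * B := hB ▸ h₃.B_mul_τ₂ hQ₀ hQ₁
  have ht₂s₃ : t₂ * s₃ = s₃ * t₂ + B * (t₃ - t₂) := hB ▸ h₃.τ₂_mul_σ₁ hQ₀ hQ₁
  have hv : (t₁ - t₂) * (s₃ - s₁) = B * (t₁ - t₂) + (t₃ - t₂) * B := by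
    linear_combination (norm := skip)
      -hBt₃ + hBt₂ - hs₃t₁ - ht₂s₃ + h₁.symm.mul_sub_add_sub_mul hQ₀ hQ₁ - hB * (t₁ - t₂)
    simp only [add_mul, mul_sub, sub_mul, smul_sub, smul_mul_assoc, one_mul]
    module
  calc mixedDiff t₁ t₂ t₃ 1 1 * (s₃ - s₁)
      = (t₁ - t₂) * (s₃ - s₁) * t₃ - t₂ * ((t₁ - t₂) * (s₃ - s₁)) := by
        rw [mixedDiff_one_one]
        linear_combination (norm := noncomm_ring) (t₁ - t₂) * (hs₁t₃ - h₃.commute₁)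
    _ = (B * (t₁ - t₂) + (t₃ - t₂) * B) * t₃ - t₂ * (B * (t₁ - t₂) + (t₃ - t₂) * B) := by
        rw [hv]
    _ = 0 := by
        linear_combination (norm := noncomm_ring)
          B * ht + hBt₃ * t₁ - hBt₂ * t₃ - t₂ * hBt₃ + t₂ * hBt₂

lemma mixedDiff_mul_sub_eq_zero (h₁ : IsSingularHeckePair Q s₁ s₂ t₁ t₂)
    (h₃ : IsSingularHeckePair Q s₃ s₂ t₃ t₂) (hs₁t₃ : s₁ * t₃ = t₃ * s₁)
    (hs₃t₁ : s₃ * t₁ = t₁ * s₃) (ht : t₁ * t₃ = t₃ * t₁) (hQ₀ : Q ≠ 0) (hQ₁ : Q ≠ 1) (a b : ℕ) :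
    mixedDiff t₁ t₂ t₃ a b * (s₃ - s₁) = 0 :=
  mixedDiff_mul_eq_zero ht ((Commute.sub_left hs₃t₁ h₁.commute₁).symm)
    ((Commute.sub_left h₃.commute₁ hs₁t₃).symm)
    (mixedDiff_one_one_mul_sub_eq_zero h₁ h₃ hs₁t₃ hs₃t₁ ht hQ₀ hQ₁) a b

end SingularHeckePair

section SingularHeckeAlgebra

variable {n : ℕ}

lemma ιH_mul (α β : SB n) : ιH (α * β) = ιH α * ιH β := by
  simp only [ιH, map_mul]
  rfl

lemma mk'_eq_of_rel {x y : FreeMonoid (SBGen n)} (h : SBRel n x y) :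
    (SBcon n).mk' x = (SBcon n).mk' y :=
  (Con.eq _).mpr (ConGen.Rel.of _ _ h)

lemma σH_mul_self (i : Fin (n - 1)) : σH i * σH i = (q - 1) • σH i + q • 1 := by
  have h := RingQuot.mkAlgHom_rel K (show hrel n _ _ from ⟨i, rfl, rfl⟩)
  rw [map_pow, map_add, map_smul, map_smul, map_one] at h
  exact (pow_two _).symm.trans h

lemma σH_mul_τH_of_far {i j : Fin (n - 1)} (hij : far i j) : σH i * τH j = τH j * σH i := by
  simp only [σH, τH, ← ιH_mul]
  exact congrArg ιH (mk'_eq_of_rel (.st_comm i j hij))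

lemma τH_mul_τH_of_far {i j : Fin (n - 1)} (hij : far i j) : τH i * τH j = τH j * τH i := by
  simp only [τH, ← ιH_mul]
  exact congrArg ιH (mk'_eq_of_rel (.tt_comm i j hij))

lemma isSingularHeckePair_of_adj {i j : Fin (n - 1)} (hij : adj i j) :
    IsSingularHeckePair q (σH i) (σH j) (τH i) (τH j) := by
  refine ⟨σH_mul_self i, σH_mul_self j, ?_, ?_, ?_, ?_⟩ <;> simp only [σH, τH, ← ιH_mul] <;>
    refine congrArg ιH (mk'_eq_of_rel ?_)
  exacts [.sigma_tau i, .sigma_tau j, .braid_tau i j hij, .braid_tau j i hij.symm]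

end SingularHeckeAlgebra

/-- For `n ≥ 4` and `a, b ≥ 1`, in `H(SB_n)`, with
`B₁₂ = σ₁ + σ₂ − (q−1)` and `B₂₃ = σ₂ + σ₃ − (q−1)`:
`τ₁^a τ₃^b (σ₃ − σ₁) = (τ₂^b τ₁^a + τ₂^a τ₃^b)(σ₃ − σ₁) + τ₂^{a+b} (B₁₂ − B₂₃)`. -/
theorem statement14 (n : ℕ) (hn : 4 ≤ n) (a b : ℕ) :
    τH (⟨0, by omega⟩ : Fin (n - 1)) ^ a * τH (⟨2, by omega⟩ : Fin (n - 1)) ^ b *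
        (σH ⟨2, by omega⟩ - σH ⟨0, by omega⟩)
      = (τH (⟨1, by omega⟩ : Fin (n - 1)) ^ b * τH (⟨0, by omega⟩ : Fin (n - 1)) ^ a
          + τH (⟨1, by omega⟩ : Fin (n - 1)) ^ a * τH (⟨2, by omega⟩ : Fin (n - 1)) ^ b) *
          (σH ⟨2, by omega⟩ - σH ⟨0, by omega⟩)
        + τH (⟨1, by omega⟩ : Fin (n - 1)) ^ (a + b) *
          ((σH ⟨0, by omega⟩ + σH ⟨1, by omega⟩ - cK (q - 1))
            - (σH ⟨1, by omega⟩ + σH ⟨2, by omega⟩ - cK (q - 1))) := by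
  have h₀₁ : adj (⟨0, by omega⟩ : Fin (n - 1)) ⟨1, by omega⟩ := Or.inl rfl
  have h₂₁ : adj (⟨2, by omega⟩ : Fin (n - 1)) ⟨1, by omega⟩ := Or.inr rfl
  have h₀₂ : far (⟨0, by omega⟩ : Fin (n - 1)) ⟨2, by omega⟩ := Or.inl le_rfl
  have h₂₀ : far (⟨2, by omega⟩ : Fin (n - 1)) ⟨0, by omega⟩ := Or.inr le_rfl
  have key := mixedDiff_mul_sub_eq_zero (isSingularHeckePair_of_adj h₀₁)
    (isSingularHeckePair_of_adj h₂₁) (σH_mul_τH_of_far h₀₂) (σH_mul_τH_of_far h₂₀)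
    (τH_mul_τH_of_far h₀₂) q_ne_zero q_ne_one a b
  unfold mixedDiff at key
  linear_combination (norm := noncomm_ring) key
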